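/- Let A be an elementary abelian finite p-group and let a = (a_0,…,a_{p−1}) ∈ B(A). Then a ∈ γ_2(W(A)) if and only if a_0·a_1·⋯·a_{p−1} = 1; and a ∈ γ_3(W(A)) if and only if both a_0·a_1·⋯·a_{p−1} = 1 and a_0·a_1^2·a_2^3·⋯·a_{p−2}^{p−1} = 1. -/

import Mathlib

open Pointwise

namespace GGS
noncomputable section

variable (p : ℕ)

def shiftAut (G : Type*) [Group G] : Multiplicative (ZMod p) →* MulAut (ZMod p → G) :=
  MonoidHom.mk'
    (fun k =>
      { toFun := fun g i => g (i + Multiplicative.toAdd k)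
        invFun := fun g i => g (i - Multiplicative.toAdd k)
        left_inv := fun g => by funext i; simp
        right_inv := fun g => by funext i; simp
        map_mul' := fun g h => rfl })
    (fun k l => by
      apply MulEquiv.ext
      intro g
      funext i
      show g (i + Multiplicative.toAdd (k * l)) = g (i + Multiplicative.toAdd k + Multiplicative.toAdd l)
      rw [toAdd_mul, add_assoc])

abbrev W (G : Type*) [Group G] :=
  SemidirectProduct (ZMod p → G) (Multiplicative (ZMod p)) (shiftAut p G)

def inlW (G : Type*) [Group G] : (ZMod p → G) →* W p G := SemidirectProduct.inl

def sigma (G : Type*) [Group G] : W p G := SemidirectProduct.inr (Multiplicative.ofAdd (1 : ZMod p))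

def baseW (G : Type*) [Group G] : Subgroup (W p G) := (inlW p G).range

/-- Δ(g) = [g,σ] = g⁻¹ σ⁻¹ g σ, read off in the base group. -/
def Delta (G : Type*) [Group G] (g : ZMod p → G) : ZMod p → G :=
  ((inlW p G g)⁻¹ * (sigma p G)⁻¹ * inlW p G g * sigma p G).left

/-- γ₁* = B(G), γ_{i+1}* = [γ_i*, W(G)]; here `gammaStar n` is γ_{n+1}*. -/
def gammaStar (G : Type*) [Group G] : ℕ → Subgroup (W p G)
  | 0 => baseW p G
  | (n + 1) => ⁅gammaStar G n, ⊤⁆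

def lamG (G : Type*) [Group G] (g : G) (i : ℕ) : ZMod p → G :=
  (Delta p G)^[i - 1] (fun t => if t = 0 then g else 1)

def BSub (G : Type*) [Group G] (H : Subgroup G) : Subgroup (W p G) :=
  Subgroup.map (inlW p G) (Subgroup.pi Set.univ fun _ => H)

def inlF (F : Type*) [AddGroup F] (v : ZMod p → F) : W p (Multiplicative F) :=
  inlW p (Multiplicative F) (fun i => Multiplicative.ofAdd (v i))

def DeltaF (F : Type*) [AddGroup F] (v : ZMod p → F) : ZMod p → F :=
  fun i => Multiplicative.toAdd (Delta p (Multiplicative F) (fun j => Multiplicative.ofAdd (v j)) i)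

def lamF (F : Type*) [AddGroup F] [One F] (i : ℕ) : ZMod p → F :=
  (DeltaF p F)^[i - 1] (fun j => if j = 0 then 1 else 0)

end
end GGS

open GGS

/-! Since `A` is abelian, `x ↦ (∏ᵢ xᵢ, x.right)` is a homomorphism from `W(A)` to an abelian
group, so `γ₂` consists of base elements with coordinate product `1`; conversely such a `v` is the
commutator `[u, σ]` of its tail products `uᵢ = vᵢ vᵢ₊₁ ⋯ v_{p-1}`.
For `v ∈ γ₂` and `y ∈ W`, `[v, y] = v / (v shifted by y)`, and on the kernel of the coordinate
product the weighted product `∏ⱼ vⱼ^(j+1)` is shift invariant because `A` has exponent `p`; so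
`γ₃` lies in the kernel of both products. Conversely the coordinate product of the tail products
of `v` is the weighted product of `v`, so when both vanish `v = [u, σ]` with `u ∈ γ₂`. -/

open scoped commutatorElement

namespace GGS

section Coordinates

variable {p : ℕ} [NeZero p] {M : Type*}

theorem prod_range_natCast_eq_prod_univ [CommMonoid M] (f : ZMod p → M) :
    ∏ r ∈ Finset.range p, f r = ∏ j, f j :=
  Finset.prod_bij' (fun r _ => r) (fun j _ => j.val) (fun _ _ => Finset.mem_univ _)
    (fun j _ => Finset.mem_range.mpr j.val_lt)
    (fun _ hr => ZMod.val_natCast_of_lt (Finset.mem_range.mp hr))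
    (fun j _ => ZMod.natCast_zmod_val j) (fun _ _ => rfl)

theorem pow_val_add [Monoid M] {a : M} (ha : a ^ p = 1) (k l : ZMod p) :
    a ^ (k + l).val = a ^ k.val * a ^ l.val := by
  rw [ZMod.val_add, ← pow_eq_pow_mod _ ha, pow_add]

end Coordinates

variable {p : ℕ} {A : Type*} [CommGroup A]

@[simp] theorem inlW_left (v : ZMod p → A) : (inlW p A v).left = v := rfl

@[simp] theorem inlW_right (v : ZMod p → A) : (inlW p A v).right = 1 := rfl

theorem inlW_injective : Function.Injective (inlW p A) :=
  SemidirectProduct.inl_injective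

theorem shiftAut_apply (G : Type*) [Group G] (k : Multiplicative (ZMod p)) (g : ZMod p → G)
    (i : ZMod p) : shiftAut p G k g i = g (i + Multiplicative.toAdd k) := rfl

theorem commutatorElement_inlW (v : ZMod p → A) (y : W p A) :
    ⁅inlW p A v, y⁆ = inlW p A (v / fun i => v (i + Multiplicative.toAdd y.right)) := by
  ext i
  · simp [commutatorElement_def, shiftAut_apply, div_eq_mul_inv, mul_comm, mul_left_comm]
  · rw [inlW_right]
    simp [commutatorElement_def]

section Invariants

variable [NeZero p]

def coordProd : (ZMod p → A) →* A where
  toFun v := ∏ j, v j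
  map_one' := Finset.prod_const_one
  map_mul' _ _ := Finset.prod_mul_distrib

/-- The exponent `(j + 1).val` wraps to `0` at `j = p - 1`, so this is `v₀ v₁² ⋯ v_{p-2}^(p-1)`. -/
def weightedProd : (ZMod p → A) →* A where
  toFun v := ∏ j, v j ^ (j + 1).val
  map_one' := by simp
  map_mul' _ _ := by simp only [Pi.mul_apply, mul_pow, Finset.prod_mul_distrib]

theorem coordProd_apply (v : ZMod p → A) : coordProd v = ∏ j, v j := rfl

theorem weightedProd_apply (v : ZMod p → A) : weightedProd v = ∏ j, v j ^ (j + 1).val := rfl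

theorem coordProd_comp_add (v : ZMod p → A) (m : ZMod p) :
    coordProd (fun i => v (i + m)) = coordProd v :=
  Fintype.prod_equiv (Equiv.addRight m) _ _ fun _ => rfl

theorem weightedProd_eq_mul_comp_add (hA : ∀ a : A, a ^ p = 1) (v : ZMod p → A) (m : ZMod p) :
    weightedProd v = weightedProd (fun i => v (i + m)) * coordProd v ^ m.val := by
  have hshift : weightedProd (fun i => v (i + m)) = ∏ j, v j ^ (j - m + 1).val :=
    Fintype.prod_equiv (Equiv.addRight m) _ _ fun j => by simp
  rw [hshift, coordProd_apply, ← Finset.prod_pow, ← Finset.prod_mul_distrib, weightedProd_apply]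
  refine Finset.prod_congr rfl fun j _ => ?_
  rw [← pow_val_add (hA _), sub_add_eq_add_sub, sub_add_cancel]

def coordProdRight : W p A →* A × Multiplicative (ZMod p) where
  toFun x := (coordProd x.left, x.right)
  map_one' := by simp
  map_mul' x y := by
    simp only [SemidirectProduct.mul_left, SemidirectProduct.mul_right, map_mul, Prod.mk_mul_mk]
    rw [← coordProd_comp_add y.left (Multiplicative.toAdd x.right)]
    rfl

theorem lowerCentralSeries_one_le :
    (⊤ : Subgroup (W p A)).lowerCentralSeries 1 ≤ coordProd.ker.map (inlW p A) := by
  intro x hx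
  have hker : coordProdRight x = 1 :=
    MonoidHom.mem_ker.mp (Abelianization.commutator_subset_ker coordProdRight hx)
  refine ⟨x.left, congrArg Prod.fst hker, SemidirectProduct.ext rfl ?_⟩
  exact (congrArg Prod.snd hker).symm

theorem lowerCentralSeries_two_le (hA : ∀ a : A, a ^ p = 1) :
    (⊤ : Subgroup (W p A)).lowerCentralSeries 2 ≤
      (coordProd.ker ⊓ weightedProd.ker).map (inlW p A) := by
  rw [Subgroup.lowerCentralSeries_succ, Subgroup.commutator_le]
  intro g hg y _
  obtain ⟨v, hv, rfl⟩ := lowerCentralSeries_one_le hg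
  rw [SetLike.mem_coe, MonoidHom.mem_ker] at hv
  set m := Multiplicative.toAdd y.right
  refine ⟨v / fun i => v (i + m), Subgroup.mem_inf.mpr ⟨MonoidHom.mem_ker.mpr ?_,
    MonoidHom.mem_ker.mpr ?_⟩, (commutatorElement_inlW v y).symm⟩
  · rw [map_div, coordProd_comp_add, div_self']
  · rw [map_div, weightedProd_eq_mul_comp_add hA v m, hv, one_pow, mul_one, div_self']

def tailProd (v : ZMod p → A) (i : ZMod p) : A := ∏ k ∈ Finset.Ico i.val p, v k

theorem tailProd_div_tailProd_add_one {v : ZMod p → A} (hv : coordProd v = 1) (i : ZMod p) :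
    tailProd v i / tailProd v (i + 1) = v i := by
  have hsucc : i + 1 = ((i.val + 1 : ℕ) : ZMod p) := by push_cast; rw [ZMod.natCast_zmod_val]
  have hfirst : v (i.val : ZMod p) = v i := by rw [ZMod.natCast_zmod_val]
  rcases (show i.val + 1 ≤ p from i.val_lt).lt_or_eq with hlt | heq
  · have hval : (i + 1).val = i.val + 1 := by rw [hsucc, ZMod.val_natCast_of_lt hlt]
    rw [tailProd, Finset.prod_eq_prod_Ico_succ_bot (Nat.lt_of_succ_lt hlt), tailProd, hval,
      hfirst, mul_div_cancel_right]
  · have hzero : i + 1 = 0 := by rw [hsucc, heq, ZMod.natCast_self]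
    have hlast : Finset.Ico i.val p = {i.val} := by
      ext k
      rw [Finset.mem_Ico, Finset.mem_singleton]
      omega
    rw [tailProd, tailProd, hzero, ZMod.val_zero, ← Finset.range_eq_Ico, hlast,
      Finset.prod_singleton, prod_range_natCast_eq_prod_univ, ← coordProd_apply, hv, div_one,
      hfirst]

theorem commutatorElement_inlW_tailProd_sigma {v : ZMod p → A} (hv : coordProd v = 1) :
    ⁅inlW p A (tailProd v), sigma p A⁆ = inlW p A v := by
  rw [commutatorElement_inlW]
  congr 1
  funext i
  exact tailProd_div_tailProd_add_one hv i

theorem weightedProd_eq_prod_range (hA : ∀ a : A, a ^ p = 1) (v : ZMod p → A) :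
    weightedProd v = ∏ r ∈ Finset.range p, v r ^ (r + 1) := by
  rw [weightedProd_apply, ← prod_range_natCast_eq_prod_univ]
  refine Finset.prod_congr rfl fun r _ => ?_
  rw [← Nat.cast_add_one, ZMod.val_natCast, ← pow_eq_pow_mod _ (hA _)]

theorem coordProd_tailProd (hA : ∀ a : A, a ^ p = 1) (v : ZMod p → A) :
    coordProd (tailProd v) = weightedProd v := by
  rw [weightedProd_eq_prod_range hA, coordProd_apply, ← prod_range_natCast_eq_prod_univ]
  calc ∏ r ∈ Finset.range p, tailProd v r
      = ∏ r ∈ Finset.range p, ∏ k ∈ Finset.Ico r p, v k :=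
        Finset.prod_congr rfl fun r hr => by
          rw [tailProd, ZMod.val_natCast_of_lt (Finset.mem_range.mp hr)]
    _ = ∏ k ∈ Finset.range p, ∏ _r ∈ Finset.range (k + 1), v k :=
        Finset.prod_comm' fun r k => by
          simp only [Finset.mem_range, Finset.mem_Ico]
          omega
    _ = ∏ k ∈ Finset.range p, v k ^ (k + 1) := by simp only [Finset.prod_const, Finset.card_range]

theorem inlW_mem_lowerCentralSeries_one_iff (v : ZMod p → A) :
    inlW p A v ∈ (⊤ : Subgroup (W p A)).lowerCentralSeries 1 ↔ coordProd v = 1 := by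
  refine ⟨fun h => ?_, fun hv => ?_⟩
  · exact (Subgroup.mem_map_iff_mem inlW_injective).mp (lowerCentralSeries_one_le h)
  · rw [← commutatorElement_inlW_tailProd_sigma hv]
    exact Subgroup.commutator_mem_commutator (Subgroup.mem_top _) (Subgroup.mem_top _)

theorem inlW_mem_lowerCentralSeries_two_iff (hA : ∀ a : A, a ^ p = 1) (v : ZMod p → A) :
    inlW p A v ∈ (⊤ : Subgroup (W p A)).lowerCentralSeries 2 ↔
      coordProd v = 1 ∧ weightedProd v = 1 := by
  refine ⟨fun h => ?_, fun ⟨hv, hw⟩ => ?_⟩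
  · exact (Subgroup.mem_map_iff_mem inlW_injective).mp (lowerCentralSeries_two_le hA h)
  · have htail : inlW p A (tailProd v) ∈ (⊤ : Subgroup (W p A)).lowerCentralSeries 1 := by
      rw [inlW_mem_lowerCentralSeries_one_iff, coordProd_tailProd hA, hw]
    rw [← commutatorElement_inlW_tailProd_sigma hv]
    exact Subgroup.commutator_mem_commutator htail (Subgroup.mem_top _)

theorem weightedProd_eq_prod_range_sub_one (hA : ∀ a : A, a ^ p = 1) (v : ZMod p → A) :
    weightedProd v = ∏ r ∈ Finset.range (p - 1), v r ^ (r + 1) := by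
  obtain ⟨n, rfl⟩ := Nat.exists_eq_add_one_of_ne_zero (NeZero.ne p)
  rw [weightedProd_eq_prod_range hA, Finset.prod_range_succ, hA, mul_one, Nat.add_sub_cancel]

end Invariants

end GGS

theorem statement12_general (p : ℕ) [Fact p.Prime]
    (A : Type*) [CommGroup A] (hA : ∀ a : A, a ^ p = 1)
    (v : ZMod p → A) :
    (inlW p A v ∈ Subgroup.lowerCentralSeries (⊤ : Subgroup (W p A)) 1 ↔ ∏ j : ZMod p, v j = 1)
    ∧ (inlW p A v ∈ Subgroup.lowerCentralSeries (⊤ : Subgroup (W p A)) 2 ↔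
        (∏ j : ZMod p, v j = 1 ∧
          ∏ r ∈ Finset.range (p - 1), v (r : ZMod p) ^ (r + 1) = 1)) := by
  rw [inlW_mem_lowerCentralSeries_one_iff, inlW_mem_lowerCentralSeries_two_iff hA,
    ← weightedProd_eq_prod_range_sub_one hA]
  exact ⟨Iff.rfl, Iff.rfl⟩

/-- For an elementary abelian finite p-group A and a = (a₀,…,a_{p−1}) ∈ B(A):
    a ∈ γ_2(W(A)) iff a₀·a₁·⋯·a_{p−1} = 1, and a ∈ γ_3(W(A)) iff additionally
    a₀·a₁²·a₂³·⋯·a_{p−2}^{p−1} = 1.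
    (γ_i(W(A)) = `lowerCentralSeries (W p A) (i-1)`.) -/
theorem statement12 (p : ℕ) [Fact p.Prime] (hp : Odd p)
    (A : Type*) [CommGroup A] [Fintype A] (hA : ∀ a : A, a ^ p = 1)
    (v : ZMod p → A) :
    (inlW p A v ∈ Subgroup.lowerCentralSeries (⊤ : Subgroup (W p A)) 1 ↔ ∏ j : ZMod p, v j = 1)
    ∧ (inlW p A v ∈ Subgroup.lowerCentralSeries (⊤ : Subgroup (W p A)) 2 ↔
        (∏ j : ZMod p, v j = 1 ∧
          ∏ r ∈ Finset.range (p - 1), v (r : ZMod p) ^ (r + 1) = 1)) :=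
  statement12_general p A hA v
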